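/- Let A be an abelian category with a slope function μ satisfying the seesaw property. If E is an object such that every nonzero quotient Q of E satisfies μ(Q) ≥ μ(E), and F ⊆ E is a subobject with μ(F) = μ(E) that is maximal among subobjects of slope μ(E), then the quotient E/F contains no nonzero subobject of slope ≥ μ(E) other than possibly zero, i.e., every nonzero subobject S ⊆ E/F has μ(S) < μ(E). -/

import Mathlib

open CategoryTheory CategoryTheory.Limits
open ZeroObject

universe v u

variable {C : Type u} [Category.{v} C] [Abelian C]

/-- The slope `d/r`, with value `⊤` when `r = 0`. -/
noncomputable def slopeOf (r d : C → ℝ) (E : C) : EReal :=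
  if r E = 0 then ⊤ else ((d E / r E : ℝ) : EReal)

/-- `f` is additive on short exact sequences (i.e. factors through `K(A)`). -/
def AdditiveOnSES {C : Type u} [Category.{v} C] [Abelian C] (f : C → ℝ) : Prop :=
  ∀ (S : ShortComplex C), S.ShortExact → f S.X₂ = f S.X₁ + f S.X₃

/-- `E` is semistable for the slope `μ`: every nonzero proper subobject has slope `≤ μ E`. -/
def Semistable (μ : C → EReal) (E : C) : Prop :=
  ∀ (F : C) (ι : F ⟶ E), Mono ι → ¬ IsZero F → ¬ IsIso ι → μ F ≤ μ E

/-- The `i`-th factor `Eᵢ₊₁/Eᵢ` of a filtration of `E` by subobjects. -/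
noncomputable def factor {E : C} {n : ℕ} (s : Fin (n + 1) → Subobject E)
    (hs : Monotone s) (i : Fin n) : C :=
  cokernel (Subobject.ofLE (s i.castSucc) (s i.succ) (hs (show i.castSucc < i.succ from Fin.castSucc_lt_succ).le))

/-- `s` is a Harder–Narasimhan filtration of `E` with respect to the slope `μ`. -/
def IsHNFiltration (μ : C → EReal) {E : C} {n : ℕ} (s : Fin (n + 1) → Subobject E)
    (hs : Monotone s) : Prop :=
  s 0 = ⊥ ∧ s (Fin.last n) = ⊤ ∧
  (∀ i : Fin n, ¬ IsZero (factor s hs i) ∧ Semistable μ (factor s hs i)) ∧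
  (∀ i j : Fin n, i < j → μ (factor s hs j) < μ (factor s hs i))

/-! ### Auxiliary lemmas -/

/-- The abstract slope of a pair of reals. -/
noncomputable def slAux (r d : ℝ) : EReal :=
  if r = 0 then ⊤ else ((d / r : ℝ) : EReal)

omit [Abelian C] in
lemma slopeOf_eq_slAux (r d : C → ℝ) (X : C) : slopeOf r d X = slAux (r X) (d X) := rfl

/-- Mediant inequality I: if `μ(A) ≤ μ(C)` then `μ(A) ≤ μ(B)`. -/
lemma slAux_mediant_left {ra da rc dc : ℝ} (hra : 0 ≤ ra) (hrc : 0 ≤ rc)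
    (hdc : rc = 0 → 0 < dc) (h : slAux ra da ≤ slAux rc dc) :
    slAux ra da ≤ slAux (ra + rc) (da + dc) := by
  unfold slAux at *
  rcases eq_or_lt_of_le hra with hra0 | hra0
  · -- ra = 0
    rw [if_pos hra0.symm] at h ⊢
    rw [top_le_iff] at h
    have hrc0 : rc = 0 := by
      by_contra hc
      rw [if_neg hc] at h
      exact EReal.coe_ne_top _ h
    rw [if_pos (by rw [← hra0, hrc0, add_zero]), top_le_iff]
  · rcases eq_or_lt_of_le hrc with hrc0 | hrc0
    · -- rc = 0, ra > 0
      have hdc' := hdc hrc0.symm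
      rw [if_neg (ne_of_gt hra0), if_neg (by rw [← hrc0, add_zero]; exact ne_of_gt hra0)]
      rw [EReal.coe_le_coe_iff, ← hrc0, add_zero, div_le_div_iff₀ hra0 hra0]
      nlinarith
    · -- both positive
      rw [if_neg (ne_of_gt hra0), if_neg (ne_of_gt hrc0)] at h
      rw [if_neg (ne_of_gt hra0), if_neg (ne_of_gt (by linarith : (0:ℝ) < ra + rc))]
      rw [EReal.coe_le_coe_iff] at h ⊢
      rw [div_le_div_iff₀ hra0 hrc0] at h
      rw [div_le_div_iff₀ hra0 (by linarith : (0:ℝ) < ra + rc)]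
      nlinarith

/-- Mediant inequality II: if `μ(B) ≤ μ(C)` then `μ(A) ≤ μ(B)`. -/
lemma slAux_mediant_right {ra da rc dc : ℝ} (hra : 0 ≤ ra) (hrc : 0 ≤ rc)
    (hda : ra = 0 → 0 < da) (hdc : rc = 0 → 0 < dc)
    (h : slAux (ra + rc) (da + dc) ≤ slAux rc dc) :
    slAux ra da ≤ slAux (ra + rc) (da + dc) := by
  unfold slAux at *
  rcases eq_or_lt_of_le hrc with hrc0 | hrc0
  · -- rc = 0
    have hdc' := hdc hrc0.symm
    rcases eq_or_lt_of_le hra with hra0 | hra0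
    · rw [if_pos hra0.symm, if_pos (by rw [← hra0, ← hrc0, add_zero]), top_le_iff]
    · rw [if_neg (ne_of_gt hra0), if_neg (by rw [← hrc0, add_zero]; exact ne_of_gt hra0),
        EReal.coe_le_coe_iff, ← hrc0, add_zero, div_le_div_iff₀ hra0 hra0]
      nlinarith
  · rcases eq_or_lt_of_le hra with hra0 | hra0
    · -- ra = 0, rc > 0 : contradiction with h
      exfalso
      have hda' := hda hra0.symm
      rw [if_neg (ne_of_gt hrc0), if_neg (by rw [← hra0, zero_add]; exact ne_of_gt hrc0),
        EReal.coe_le_coe_iff, ← hra0, zero_add] at h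
      rw [div_le_div_iff₀ hrc0 hrc0] at h
      nlinarith
    · -- both positive
      rw [if_neg (ne_of_gt hrc0), if_neg (ne_of_gt (by linarith : (0:ℝ) < ra + rc)),
        EReal.coe_le_coe_iff] at h
      rw [if_neg (ne_of_gt hra0), if_neg (ne_of_gt (by linarith : (0:ℝ) < ra + rc)),
        EReal.coe_le_coe_iff]
      rw [div_le_div_iff₀ (by linarith : (0:ℝ) < ra + rc) hrc0] at h
      rw [div_le_div_iff₀ hra0 (by linarith : (0:ℝ) < ra + rc)]
      nlinarith

/-- Additive functions vanish on zero objects. -/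
lemma AdditiveOnSES.eq_zero_of_isZero {f : C → ℝ} (hf : AdditiveOnSES f)
    {X : C} (hX : IsZero X) : f X = 0 := by
  have hz : (𝟙 X) ≫ (𝟙 X) = 0 := by rw [hX.eq_zero_of_src (𝟙 X)]; simp
  have hse : (ShortComplex.mk (𝟙 X) (𝟙 X) hz).ShortExact :=
    { exact := by
        rw [ShortComplex.exact_iff_epi _ (hX.eq_zero_of_src _)]
        dsimp
        infer_instance
      mono_f := by dsimp; infer_instance
      epi_g := by dsimp; infer_instance }
  have := hf _ hse
  dsimp at this
  linarith

/-- Additive functions are invariant under isomorphism. -/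
lemma AdditiveOnSES.eq_of_iso {f : C → ℝ} (hf : AdditiveOnSES f)
    {X Y : C} (e : X ≅ Y) : f X = f Y := by
  have hse : (ShortComplex.mk e.hom (0 : Y ⟶ (0 : C)) comp_zero).ShortExact :=
    { exact := by
        rw [ShortComplex.exact_iff_epi _ rfl]
        dsimp
        infer_instance
      mono_f := by dsimp; infer_instance
      epi_g := by dsimp; infer_instance }
  have h1 := hf _ hse
  have h0 : f (0 : C) = 0 := hf.eq_zero_of_isZero (isZero_zero C)
  dsimp at h1
  rw [h1, h0, add_zero]

/-- A kernel-type short exact sequence: `0 → ker g → X → Y → 0` for epi `g`. -/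
lemma shortExact_kernel {X Y : C} (g : X ⟶ Y) [Epi g] :
    (ShortComplex.mk (kernel.ι g) g (kernel.condition g)).ShortExact :=
  { exact := ShortComplex.exact_of_f_is_kernel _ (kernelIsKernel g)
    mono_f := by dsimp; infer_instance
    epi_g := by dsimp; infer_instance }

/-- A cokernel-type short exact sequence: `0 → X → Y → coker f → 0` for mono `f`. -/
lemma shortExact_cokernel {X Y : C} (f : X ⟶ Y) [Mono f] :
    (ShortComplex.mk f (cokernel.π f) (cokernel.condition f)).ShortExact :=
  { exact := ShortComplex.exact_of_g_is_cokernel _ (cokernelIsCokernel f)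
    mono_f := by dsimp; infer_instance
    epi_g := by dsimp; infer_instance }

/-- Suppose every nonzero quotient `Q` of `E` satisfies `μ(Q) ≥ μ(E)`, and
`F ⊆ E` is a nonzero subobject with `μ(F) = μ(E)` which is maximal among subobjects of slope
`μ(E)`. Then every nonzero subobject `S` of the quotient `E/F` satisfies `μ(S) < μ(E)`. -/
theorem maximal_destabilizing_quotient_slopes
    (r d : C → ℝ) (hradd : AdditiveOnSES r) (hdadd : AdditiveOnSES d)
    (hr : ∀ E : C, 0 ≤ r E) (hd : ∀ E : C, ¬ IsZero E → r E = 0 → 0 < d E)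
    (E : C) (hE : ¬ IsZero E)
    (hquot : ∀ (Q : C) (g : E ⟶ Q), Epi g → ¬ IsZero Q → slopeOf r d E ≤ slopeOf r d Q)
    (F : Subobject E) (hF : ¬ IsZero (F : C))
    (hFslope : slopeOf r d (F : C) = slopeOf r d E)
    (hmax : ∀ F' : Subobject E, F ≤ F' → slopeOf r d (F' : C) = slopeOf r d E → F = F') :
    ∀ (S : C) (j : S ⟶ cokernel F.arrow), Mono j → ¬ IsZero S →
      slopeOf r d S < slopeOf r d E := by
  intro S j hj hS
  haveI := hj
  by_contra hlt
  push_neg at hlt   -- hlt : slopeOf r d E ≤ slopeOf r d S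
  let Q : C := cokernel F.arrow
  let π : E ⟶ Q := cokernel.π F.arrow
  let g : E ⟶ cokernel j := π ≫ cokernel.π j
  haveI : Epi g := epi_comp _ _
  let F' : Subobject E := kernelSubobject g
  have hFF' : F ≤ F' := le_kernelSubobject _ _ (by
    show F.arrow ≫ (π ≫ cokernel.π j) = 0
    rw [← Category.assoc]
    show (F.arrow ≫ cokernel.π F.arrow) ≫ cokernel.π j = 0
    rw [cokernel.condition, zero_comp])
  -- short exact sequences
  have ses1 := shortExact_cokernel F.arrow
  have ses2 := shortExact_cokernel j
  have ses3 := shortExact_kernel g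
  -- additivity
  have hr1 : r E = r (F : C) + r Q := hradd _ ses1
  have hd1 : d E = d (F : C) + d Q := hdadd _ ses1
  have hr2 : r Q = r S + r (cokernel j) := hradd _ ses2
  have hd2 : d Q = d S + d (cokernel j) := hdadd _ ses2
  have hr3 : r E = r (kernel g) + r (cokernel j) := hradd _ ses3
  have hd3 : d E = d (kernel g) + d (cokernel j) := hdadd _ ses3
  have hrK : r (F' : C) = r (kernel g) := hradd.eq_of_iso (kernelSubobjectIso g)
  have hdK : d (F' : C) = d (kernel g) := hdadd.eq_of_iso (kernelSubobjectIso g)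
  have hrF' : r (F' : C) = r (F : C) + r S := by rw [hrK]; linarith
  have hdF' : d (F' : C) = d (F : C) + d S := by rw [hdK]; linarith
  -- nonzero facts
  have hF'nz : ¬ IsZero (F' : C) := fun h =>
    hF (IsZero.of_mono (Subobject.ofLE F F' hFF') h)
  -- Step A : μ(E) = μ(F) ≤ μ(F')
  have stepA : slopeOf r d E ≤ slopeOf r d (F' : C) := by
    rw [← hFslope, slopeOf_eq_slAux, slopeOf_eq_slAux, hrF', hdF']
    refine slAux_mediant_left (hr _) (hr _) (fun h0 => hd S hS h0) ?_
    rw [← slopeOf_eq_slAux, ← slopeOf_eq_slAux, hFslope]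
    exact hlt
  -- Step B : μ(F') ≤ μ(E)
  have stepB : slopeOf r d (F' : C) ≤ slopeOf r d E := by
    by_cases hcz : IsZero (cokernel j)
    · -- then F' has the same invariants as E
      have h0r : r (cokernel j) = 0 := hradd.eq_zero_of_isZero hcz
      have h0d : d (cokernel j) = 0 := hdadd.eq_zero_of_isZero hcz
      rw [slopeOf_eq_slAux, slopeOf_eq_slAux, hrK, hdK]
      have h1 : r (kernel g) = r E := by linarith
      have h2 : d (kernel g) = d E := by linarith
      rw [h1, h2]
    · have hq := hquot (cokernel j) g inferInstance hcz
      have hE'r : r E = r (F' : C) + r (cokernel j) := by rw [hrK]; exact hr3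
      have hE'd : d E = d (F' : C) + d (cokernel j) := by rw [hdK]; exact hd3
      rw [slopeOf_eq_slAux, slopeOf_eq_slAux, hE'r, hE'd]
      refine slAux_mediant_right (hr _) (hr _)
        (fun h0 => hd _ hF'nz h0) (fun h0 => hd _ hcz h0) ?_
      rw [← hE'r, ← hE'd, ← slopeOf_eq_slAux, ← slopeOf_eq_slAux]
      exact hq
  -- maximality gives F = F'
  have heq : F = F' := hmax F' hFF' (le_antisymm stepB stepA)
  -- hence the invariants of S vanish, contradiction
  have hrS : r S = 0 := by
    have h := hrF'
    rw [← heq] at h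
    linarith
  have hdS : d S = 0 := by
    have h := hdF'
    rw [← heq] at h
    linarith
  have := hd S hS hrS
  linarith
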